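/- arXiv:1809.08821 — 2 statements merged into one kernel-verified Lean document; each statement's English description precedes it below -/
import Mathlib

section
/- Let X be a finite solvable group, π a set of primes, and Y a subgroup of X such that every prime dividing the index [X:Y] lies in π. Then O_π(Y) ≤ O_π(X). -/
/-- `N` is the largest normal `π`-subgroup `O_π` of the ambient group. -/
def IsMaxNormalPiSubgroup {G : Type*} [Group G] (π : Set ℕ) (N : Subgroup G) : Prop :=
  N.Normal ∧ (∀ p : ℕ, p.Prime → p ∣ Nat.card N → p ∈ π) ∧
  ∀ M : Subgroup G, M.Normal → (∀ p : ℕ, p.Prime → p ∣ Nat.card M → p ∈ π) → M ≤ N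

/-!
Hall `π`-subgroups exist in a finite solvable group `G`, by induction on `|G|`: take a nontrivial
normal `p`-subgroup `M`; the preimage of a Hall `π`-subgroup of `G ⧸ M` is a Hall `π`-subgroup if
`p ∈ π`, and otherwise a Schur–Zassenhaus complement of `M` in that preimage is one.

If `H` is a Hall `π`-subgroup of `X` and `[X : Y]` is a `π`-number, then `[Y : H ∩ Y] = [X : H]`, so
`H ∩ Y` is a Hall `π`-subgroup of `Y` and therefore contains `O_π(Y)`. Applied to all conjugates
of `H`, this puts `O_π(Y)` inside the normal core of `H`, a normal `π`-subgroup of `X`.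
-/

open Subgroup

def IsPiNumber (π : Set ℕ) (n : ℕ) : Prop :=
  ∀ p : ℕ, p.Prime → p ∣ n → p ∈ π

namespace IsPiNumber

variable {π : Set ℕ} {a b : ℕ}

theorem one : IsPiNumber π 1 := fun _ hp h => absurd (Nat.dvd_one.mp h) hp.ne_one

theorem of_dvd (hb : IsPiNumber π b) (hab : a ∣ b) : IsPiNumber π a :=
  fun p hp hpa => hb p hp (hpa.trans hab)

theorem mul (ha : IsPiNumber π a) (hb : IsPiNumber π b) : IsPiNumber π (a * b) :=
  fun p hp hpab => (hp.dvd_mul.mp hpab).elim (ha p hp) (hb p hp)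

theorem prime_pow {p : ℕ} (hp : p.Prime) (hpπ : p ∈ π) (k : ℕ) : IsPiNumber π (p ^ k) :=
  fun _ hq hqp => (Nat.prime_dvd_prime_iff_eq hq hp).mp (hq.dvd_of_dvd_pow hqp) ▸ hpπ

theorem coprime (ha : IsPiNumber π a) (hb : IsPiNumber πᶜ b) : a.Coprime b :=
  Nat.coprime_of_dvd fun p hp hpa hpb => hb p hp hpb (ha p hp hpa)

theorem eq_one (h : IsPiNumber π a) (h' : IsPiNumber πᶜ a) : a = 1 :=
  (Nat.coprime_self a).mp (h.coprime h')

end IsPiNumber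

theorem IsPGroup.isPiNumber_card {p : ℕ} [Fact p.Prime] {G : Type*} [Group G] [Finite G]
    (hG : IsPGroup p G) {π : Set ℕ} (hpπ : p ∈ π) : IsPiNumber π (Nat.card G) := by
  obtain ⟨k, hk⟩ := hG.exists_card_eq
  exact hk ▸ IsPiNumber.prime_pow Fact.out hpπ k

namespace Subgroup

variable {G G' : Type*} [Group G] [Group G']

theorem relIndex_ker_comap {f : G →* G'} (hf : Function.Surjective f) (K : Subgroup G') :
    f.ker.relIndex (K.comap f) = Nat.card K := by
  rw [relIndex_ker, map_comap_eq_self_of_surjective hf]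

theorem card_comap_of_surjective {f : G →* G'} (hf : Function.Surjective f) (K : Subgroup G') :
    Nat.card (K.comap f) = Nat.card f.ker * Nat.card K := by
  rw [← relIndex_bot_left, ← relIndex_mul_relIndex ⊥ f.ker _ bot_le (ker_le_comap f K),
    relIndex_bot_left, relIndex_ker_comap hf]

theorem relIndex_eq_index_of_coprime [Finite G] {H K : Subgroup G}
    (h : H.index.Coprime K.index) : H.relIndex K = H.index := by
  have hdvd : H.index ∣ H.relIndex K := by
    refine h.dvd_of_dvd_mul_right ?_
    rw [← inf_relIndex_right, relIndex_mul_index inf_le_right]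
    exact index_dvd_of_le inf_le_left
  have hle : H.relIndex K ≤ H.index := by
    rw [← relIndex_top_right]
    exact relIndex_le_of_le_right le_top (by rw [relIndex_top_right]; exact index_ne_zero_of_finite)
  exact le_antisymm hle (Nat.le_of_dvd (Nat.pos_of_ne_zero index_ne_zero_of_finite) hdvd)

def IsHall (π : Set ℕ) (H : Subgroup G) : Prop :=
  IsPiNumber π (Nat.card H) ∧ IsPiNumber πᶜ H.index

namespace IsHall

variable {π : Set ℕ}

theorem comap_mulEquiv {H : Subgroup G'} (hH : H.IsHall π) (e : G ≃* G') :
    (H.comap e.toMonoidHom).IsHall π :=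
  ⟨hH.1.of_dvd (card_comap_dvd_of_injective H _ e.injective),
    (index_comap_of_surjective H (f := e.toMonoidHom) e.surjective).symm ▸ hH.2⟩

theorem subgroupOf [Finite G] {H : Subgroup G} (hH : H.IsHall π) {K : Subgroup G}
    (hK : IsPiNumber π K.index) : (H.subgroupOf K).IsHall π :=
  ⟨hH.1.of_dvd (card_comap_dvd_of_injective H _ K.subtype_injective),
    show IsPiNumber πᶜ (H.relIndex K) from
      (relIndex_eq_index_of_coprime (hK.coprime hH.2).symm).symm ▸ hH.2⟩

/-- The index `[H ⊔ N : H]` is both a `π`-number and a `π'`-number. -/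
theorem le_of_normal [Finite G] {H : Subgroup G} (hH : H.IsHall π) {N : Subgroup G} [N.Normal]
    (hN : IsPiNumber π (Nat.card N)) : N ≤ H := by
  have hcard : Nat.card ↥(H ⊔ N) = Nat.card N * N.relIndex H := by
    rw [← relIndex_sup_right, ← relIndex_bot_left, ← relIndex_bot_left,
      relIndex_mul_relIndex ⊥ N _ bot_le le_sup_right]
  have hπ : IsPiNumber π (H.relIndex (H ⊔ N)) :=
    (hN.mul (hH.1.of_dvd (relIndex_dvd_card N H))).of_dvd (hcard ▸ relIndex_dvd_card _ _)
  have hπ' : IsPiNumber πᶜ (H.relIndex (H ⊔ N)) :=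
    hH.2.of_dvd (relIndex_dvd_index_of_le le_sup_left)
  exact le_sup_right.trans (relIndex_eq_one.mp (hπ.eq_one hπ'))

section Quotient

variable {M : Subgroup G} [M.Normal] {Hb : Subgroup (G ⧸ M)}

theorem comap_mk' (hHb : Hb.IsHall π) (hM : IsPiNumber π (Nat.card M)) :
    (Hb.comap (QuotientGroup.mk' M)).IsHall π :=
  ⟨by
    rw [card_comap_of_surjective (QuotientGroup.mk'_surjective M), QuotientGroup.ker_mk']
    exact hM.mul hHb.1,
   (index_comap_of_surjective Hb (QuotientGroup.mk'_surjective M)).symm ▸ hHb.2⟩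

/-- A Schur–Zassenhaus complement of `M` in the preimage of `Hb` is a Hall `π`-subgroup. -/
theorem exists_of_isPiNumber_compl [Finite G] (hHb : Hb.IsHall π)
    (hM : IsPiNumber πᶜ (Nat.card M)) : ∃ H : Subgroup G, H.IsHall π := by
  set L := Hb.comap (QuotientGroup.mk' M)
  have hML : M ≤ L := QuotientGroup.ker_mk' M ▸ MonoidHom.ker_le_comap _ _
  have hcard : Nat.card (M.subgroupOf L) = Nat.card M :=
    Nat.card_congr (subgroupOfEquivOfLe hML).toEquiv
  have hindex : (M.subgroupOf L).index = Nat.card Hb := by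
    rw [← relIndex, ← relIndex_ker_comap (QuotientGroup.mk'_surjective M), QuotientGroup.ker_mk']
  obtain ⟨K, hK⟩ := exists_right_complement'_of_coprime
    (hcard ▸ hindex ▸ (hHb.1.coprime hM).symm)
  refine ⟨K.map L.subtype, hHb.1.of_dvd ?_, ?_⟩
  · rw [← hindex, hK.symm.index_eq_card]
    exact card_map_dvd K L.subtype
  · rw [index_map_subtype, hK.index_eq_card, hcard,
      index_comap_of_surjective Hb (QuotientGroup.mk'_surjective M)]
    exact hM.mul hHb.2

end Quotient

end IsHall

end Subgroup

namespace Group.IsSolvable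

theorem exists_normal_ne_bot_isMulCommutative (G : Type*) [Group G]
    [IsSolvable G] [Nontrivial G] :
    ∃ A : Subgroup G, A.Normal ∧ A ≠ ⊥ ∧ IsMulCommutative A := by
  classical
  have hex : ∃ n, derivedSeries G n = ⊥ := IsSolvable.solvable
  obtain ⟨k, hk⟩ : ∃ k, Nat.find hex = k + 1 := Nat.exists_eq_add_one_of_ne_zero fun h => by
    simpa [h] using Nat.find_spec hex
  refine ⟨derivedSeries G k, derivedSeries_normal G k, Nat.find_min hex (by omega), ?_⟩
  rw [← commutator_self_eq_bot_iff, ← derivedSeries_succ, ← hk]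
  exact Nat.find_spec hex

/-- The Sylow `p`-subgroup of a nontrivial abelian normal subgroup is characteristic in it,
hence normal in `G`. -/
theorem exists_normal_ne_bot_isPGroup (G : Type*) [Group G] [Finite G]
    [IsSolvable G] [Nontrivial G] :
    ∃ p, p.Prime ∧ ∃ M : Subgroup G, M.Normal ∧ M ≠ ⊥ ∧ IsPGroup p M := by
  obtain ⟨A, hA, hA1, hAc⟩ := exists_normal_ne_bot_isMulCommutative G
  obtain ⟨p, hp, hpA⟩ := Nat.exists_prime_and_dvd (A.one_lt_card_iff_ne_bot.mpr hA1).ne'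
  have := Fact.mk hp
  let P : Sylow p A := default
  have := P.characteristic_of_normal (normal_of_isMulCommutative _)
  exact ⟨p, hp, (P : Subgroup A).map A.subtype, inferInstance,
    (map_eq_bot_iff_of_injective _ A.subtype_injective).not.mpr (P.ne_bot_of_dvd_card hpA),
    P.isPGroup'.map _⟩

theorem exists_isHall (π : Set ℕ) (G : Type*) [Group G] [Finite G] [IsSolvable G] :
    ∃ H : Subgroup G, H.IsHall π := by
  induction hn : Nat.card G using Nat.strong_induction_on generalizing G with
  | _ n ih =>
  rcases subsingleton_or_nontrivial G with hG | hG
  · refine ⟨⊤, ?_, ?_⟩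
    · rw [card_top, Nat.card_of_subsingleton (1 : G)]; exact .one
    · rw [index_top]; exact .one
  obtain ⟨p, hp, M, hM, hM1, hMp⟩ := exists_normal_ne_bot_isPGroup G
  have hlt : Nat.card (G ⧸ M) < n := by
    rw [← hn, card_eq_card_quotient_mul_card_subgroup M]
    exact lt_mul_of_one_lt_right Nat.card_pos (M.one_lt_card_iff_ne_bot.mpr hM1)
  obtain ⟨Hb, hHb⟩ := ih _ hlt (G ⧸ M) rfl
  have := Fact.mk hp
  by_cases hpπ : p ∈ π
  · exact ⟨_, hHb.comap_mk' (hMp.isPiNumber_card hpπ)⟩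
  · exact hHb.exists_of_isPiNumber_compl (hMp.isPiNumber_card hpπ)

end Group.IsSolvable

theorem opi_le_opi_of_index_pi {X : Type*} [Group X] [Finite X] [Group.IsSolvable X] (π : Set ℕ)
    (Y : Subgroup X) (hind : ∀ p : ℕ, p.Prime → p ∣ Y.index → p ∈ π)
    (NY : Subgroup ↥Y) (NX : Subgroup X)
    (hNY : IsMaxNormalPiSubgroup π NY) (hNX : IsMaxNormalPiSubgroup π NX) :
    NY.map Y.subtype ≤ NX := by
  obtain ⟨H, hH⟩ := Group.IsSolvable.exists_isHall π X
  have := hNY.1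
  have hle : NY.map Y.subtype ≤ H.normalCore := fun x hx g =>
    have hHg := (hH.comap_mulEquiv (MulAut.conj g)).subgroupOf hind
    map_le_iff_le_comap.mpr (hHg.le_of_normal hNY.2.1) hx
  exact hle.trans (hNX.2.2 _ H.normalCore_normal (hH.1.of_dvd (card_dvd_of_le H.normalCore_le)))
end

section
/- Let G be a finite solvable group and H a maximal subgroup of G with [G:H] a power of a prime p. If O_p(G) = 1, then the Fitting subgroup F(G) is contained in H, and moreover F(G) ≤ F(H); in particular F(G) is a p'-group. -/
/-!
A nilpotent normal subgroup is the product of its Sylow subgroups, each characteristic in it and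
hence normal in `G`; so `O_p(G) = 1` forces `p ∤ |F(G)|`. If `F(G) ≰ H`, maximality gives
`H F(G) = G`, and then `[G : H] = [F(G) : F(G) ∩ H]` divides `|F(G)|`, which is impossible for a
nontrivial `p`-power. Finally `F(G)` is a nilpotent normal subgroup of `H`, hence lies in `F(H)`.
-/

namespace Subgroup

variable {G : Type*} [Group G]

theorem index_dvd_card_of_sup_eq_top [Finite G] {H K : Subgroup G} [K.Normal] (h : H ⊔ K = ⊤) :
    H.index ∣ Nat.card K := by
  have hK : K.index = K.relIndex H := by rw [← relIndex_top_right, ← h, relIndex_sup_right]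
  have hdvd : Nat.card H * H.index ∣ Nat.card H * Nat.card K := by
    rw [card_mul_index, ← K.card_mul_index, hK, mul_comm (Nat.card H)]
    exact mul_dvd_mul_left _ (relIndex_dvd_card K H)
  exact Nat.dvd_of_mul_dvd_mul_left Nat.card_pos hdvd

theorem le_of_isCoatom_of_not_dvd_card [Finite G] {p : ℕ} {H N : Subgroup G} [N.Normal]
    (hH : IsCoatom H) (hpH : p ∣ H.index) (hpN : ¬ p ∣ Nat.card N) : N ≤ H := by
  by_contra hNH
  have hsup : H ⊔ N = ⊤ := hH.2 _ (left_lt_sup.mpr hNH)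
  exact hpN (hpH.trans (index_dvd_card_of_sup_eq_top hsup))

theorem not_dvd_card_of_isNilpotent_of_normal [Finite G] {p : ℕ} [Fact p.Prime]
    (hOp : ∀ N : Subgroup G, N.Normal → IsPGroup p N → N = ⊥)
    (N : Subgroup G) [N.Normal] [Group.IsNilpotent N] : ¬ p ∣ Nat.card N := by
  intro hdvd
  obtain ⟨P⟩ : Nonempty (Sylow p N) := inferInstance
  have : (P : Subgroup N).Characteristic := P.characteristic_of_normal inferInstance
  have hP : (P : Subgroup N).map N.subtype = ⊥ :=
    hOp _ inferInstance (P.isPGroup'.map N.subtype)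
  rw [map_eq_bot_iff_of_injective _ N.subtype_injective] at hP
  exact P.ne_bot_of_dvd_card hdvd hP

theorem le_map_subtype_of_isNilpotent_of_normal {H N : Subgroup G} [N.Normal]
    [Group.IsNilpotent N] (hNH : N ≤ H) (FH : Subgroup H)
    (hFH : ∀ M : Subgroup H, M.Normal → Group.IsNilpotent M → M ≤ FH) :
    N ≤ FH.map H.subtype := by
  have hnil : Group.IsNilpotent (N.subgroupOf H) :=
    Group.nilpotent_of_mulEquiv (subgroupOfEquivOfLe hNH).symm
  rw [← map_subgroupOf_eq_of_le hNH]
  exact map_mono (hFH _ inferInstance hnil)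

end Subgroup

open Subgroup in
theorem fitting_le_of_op_trivial_general {G : Type*} [Group G] [Finite G] {p : ℕ}
    (hp : p.Prime) (H : Subgroup G) (hmax : IsCoatom H) (a : ℕ) (hind : H.index = p ^ a)
    (hOp : ∀ N : Subgroup G, N.Normal → IsPGroup p ↥N → N = ⊥)
    (F : Subgroup G) (FH : Subgroup ↥H)
    (hF : F.Normal ∧ Group.IsNilpotent ↥F ∧
      ∀ M : Subgroup G, M.Normal → Group.IsNilpotent ↥M → M ≤ F)
    (hFH : FH.Normal ∧ Group.IsNilpotent ↥FH ∧
      ∀ M : Subgroup ↥H, M.Normal → Group.IsNilpotent ↥M → M ≤ FH) :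
    F ≤ H ∧ F ≤ FH.map H.subtype ∧ ¬ p ∣ Nat.card F := by
  have : Fact p.Prime := ⟨hp⟩
  obtain ⟨hFnormal, hFnil, -⟩ := hF
  have hpF : ¬ p ∣ Nat.card F := not_dvd_card_of_isNilpotent_of_normal hOp F
  have ha : a ≠ 0 := by
    rintro rfl
    exact hmax.1 (index_eq_one.mp hind)
  have hFH' : F ≤ H := le_of_isCoatom_of_not_dvd_card hmax (hind ▸ dvd_pow_self p ha) hpF
  exact ⟨hFH', le_map_subtype_of_isNilpotent_of_normal hFH' FH hFH.2.2, hpF⟩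

theorem fitting_le_of_op_trivial {G : Type*} [Group G] [Finite G] [Group.IsSolvable G] {p : ℕ}
    (hp : p.Prime) (H : Subgroup G) (hmax : IsCoatom H) (a : ℕ) (hind : H.index = p ^ a)
    (hOp : ∀ N : Subgroup G, N.Normal → IsPGroup p ↥N → N = ⊥)
    (F : Subgroup G) (FH : Subgroup ↥H)
    (hF : F.Normal ∧ Group.IsNilpotent ↥F ∧
      ∀ M : Subgroup G, M.Normal → Group.IsNilpotent ↥M → M ≤ F)
    (hFH : FH.Normal ∧ Group.IsNilpotent ↥FH ∧
      ∀ M : Subgroup ↥H, M.Normal → Group.IsNilpotent ↥M → M ≤ FH) :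
    F ≤ H ∧ F ≤ FH.map H.subtype ∧ ¬ p ∣ Nat.card F :=
  fitting_le_of_op_trivial_general hp H hmax a hind hOp F FH hF hFH
end
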